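/- arXiv:2403.09022 — 3 statements merged into one kernel-verified Lean document; each statement's English description precedes it below -/
import Mathlib

section
/- Consider energy consumption minimization over T time blocks for a single user over an AWGN channel with unit noise variance, where transmitting with power P_t ≥ 0 in block t yields rate R_t = log₂(1 + P_t) and the throughput constraint is D ≤ ∑_{t=1}^T R_t. Then every feasible power allocation satisfies ∑_{t=1}^T P_t ≥ T·(2^{D/T} − 1); that is, for any P : Fin T → ℝ with P t ≥ 0 for all t and D ≤ ∑_t log₂(1 + P t), one has ∑_t P t ≥ T·(2^{D/T} − 1). -/
/-! By concavity of `log` (Jensen), for a fixed total power `S` the throughput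
`∑ log₂ (1 + P t)` is largest for the uniform allocation `P t = S / T`, so
`D ≤ T log₂ (1 + S / T)`; solving for `S` gives the bound. -/

open Finset Real

theorem sum_log_le_card_mul_log_mean {ι : Type*} (s : Finset ι) {y : ι → ℝ}
    (hy : ∀ i ∈ s, 0 < y i) :
    ∑ i ∈ s, log (y i) ≤ #s * log ((∑ i ∈ s, y i) / #s) := by
  rcases s.eq_empty_or_nonempty with rfl | hs
  · simp
  have hcard : (0 : ℝ) < #s := by exact_mod_cast hs.card_pos
  have jensen := strictConcaveOn_log_Ioi.concaveOn.le_map_sum (t := s)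
    (w := fun _ => (#s : ℝ)⁻¹) (fun _ _ => by positivity)
    (by simp [hcard.ne']) hy
  simp only [smul_eq_mul, ← mul_sum] at jensen
  rw [inv_mul_eq_div, div_le_iff₀ hcard, mul_comm, ← div_eq_inv_mul] at jensen
  exact jensen

theorem sum_logb_le_card_mul_logb_mean {ι : Type*} (s : Finset ι) {b : ℝ} (hb : 1 ≤ b)
    {y : ι → ℝ} (hy : ∀ i ∈ s, 0 < y i) :
    ∑ i ∈ s, logb b (y i) ≤ #s * logb b ((∑ i ∈ s, y i) / #s) := by
  simp only [logb, ← sum_div, ← mul_div_assoc]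
  exact div_le_div_of_nonneg_right (sum_log_le_card_mul_log_mean s hy) (log_nonneg hb)

theorem card_mul_rpow_div_card_sub_one_le_sum {ι : Type*} (s : Finset ι) {b D : ℝ}
    (hb : 1 < b) {x : ι → ℝ} (hx : ∀ i ∈ s, 0 ≤ x i)
    (hD : D ≤ ∑ i ∈ s, logb b (1 + x i)) :
    #s * (b ^ (D / #s) - 1) ≤ ∑ i ∈ s, x i := by
  rcases s.eq_empty_or_nonempty with rfl | hs
  · simp
  have hcard : (0 : ℝ) < #s := by exact_mod_cast hs.card_pos
  have hmean : (∑ i ∈ s, (1 + x i)) / #s = 1 + (∑ i ∈ s, x i) / #s := by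
    rw [sum_add_distrib, sum_const, nsmul_one, add_div, div_self hcard.ne']
  have hpos : 0 < 1 + (∑ i ∈ s, x i) / #s := by
    have := sum_nonneg hx
    positivity
  have hrate : D / #s ≤ logb b (1 + (∑ i ∈ s, x i) / #s) := by
    rw [div_le_iff₀' hcard, ← hmean]
    exact hD.trans <| sum_logb_le_card_mul_logb_mean s hb.le fun i hi => by
      linarith [hx i hi]
  have hpow := (le_logb_iff_rpow_le hb hpos).mp hrate
  calc (#s : ℝ) * (b ^ (D / #s) - 1) ≤ #s * ((∑ i ∈ s, x i) / #s) := by gcongr; linarith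
    _ = ∑ i ∈ s, x i := mul_div_cancel₀ _ hcard.ne'

theorem awgn_energy_lower_bound_general (T : ℕ) (D : ℝ)
    (P : Fin T → ℝ) (hP : ∀ t, 0 ≤ P t)
    (hfeas : D ≤ ∑ t, Real.logb 2 (1 + P t)) :
    ∑ t, P t ≥ (T : ℝ) * ((2 : ℝ) ^ (D / (T : ℝ)) - 1) := by
  simpa using card_mul_rpow_div_card_sub_one_le_sum univ one_lt_two (fun t _ => hP t) hfeas

/-- Lower bound on total energy for single-user AWGN energy minimization over `T` blocks:
any feasible power allocation `P` (nonnegative powers, throughput `D ≤ ∑ log₂(1 + P t)`)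
uses total energy at least `T * (2^(D/T) - 1)`. -/
theorem awgn_energy_lower_bound (T : ℕ) (hT : 0 < T) (D : ℝ) (hD : 0 ≤ D)
    (P : Fin T → ℝ) (hP : ∀ t, 0 ≤ P t)
    (hfeas : D ≤ ∑ t, Real.logb 2 (1 + P t)) :
    ∑ t, P t ≥ (T : ℝ) * ((2 : ℝ) ^ (D / (T : ℝ)) - 1) :=
  awgn_energy_lower_bound_general T D P hP hfeas
end

section
/- For the single-user AWGN energy minimization problem over T time blocks with throughput constraint D ≤ ∑_{t=1}^T log₂(1 + P_t), the even (equal-power) allocation P_t = 2^{D/T} − 1 for all t is feasible and attains total energy ∑_t P_t = T·(2^{D/T} − 1); combined with the lower bound, it is an optimal (minimum total energy) allocation, i.e., even data transmission is the optimal energy consumption minimization strategy. -/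
/-- Even data transmission is optimal for single-user AWGN energy minimization:
the equal-power allocation `P t = 2^(D/T) - 1` is feasible, attains total energy
`T * (2^(D/T) - 1)`, and no feasible allocation uses less total energy. -/
theorem awgn_even_transmission_optimal (T : ℕ) (hT : 0 < T) (D : ℝ) (hD : 0 ≤ D) :
    ((∀ t : Fin T, (0 : ℝ) ≤ (2 : ℝ) ^ (D / (T : ℝ)) - 1) ∧
      D ≤ ∑ _t : Fin T, Real.logb 2 (1 + ((2 : ℝ) ^ (D / (T : ℝ)) - 1))) ∧
    (∑ _t : Fin T, ((2 : ℝ) ^ (D / (T : ℝ)) - 1) = (T : ℝ) * ((2 : ℝ) ^ (D / (T : ℝ)) - 1)) ∧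
    (∀ Q : Fin T → ℝ, (∀ t, 0 ≤ Q t) → D ≤ ∑ t, Real.logb 2 (1 + Q t) →
      ∑ _t : Fin T, ((2 : ℝ) ^ (D / (T : ℝ)) - 1) ≤ ∑ t, Q t) := by
  have hTpos : (0 : ℝ) < T := by exact_mod_cast hT
  have hDT : 0 ≤ D / (T : ℝ) := div_nonneg hD hTpos.le
  have h1le : (1 : ℝ) ≤ (2 : ℝ) ^ (D / (T : ℝ)) := Real.one_le_rpow one_le_two hDT
  have hsimp : (1 : ℝ) + ((2 : ℝ) ^ (D / (T : ℝ)) - 1) = (2 : ℝ) ^ (D / (T : ℝ)) := by ring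
  refine ⟨⟨fun t => by linarith, ?_⟩, ?_, ?_⟩
  · rw [hsimp]
    have h : Real.logb 2 ((2 : ℝ) ^ (D / (T : ℝ))) = D / T :=
      Real.logb_rpow (by norm_num) (by norm_num)
    rw [Finset.sum_const, h]
    simp only [Finset.card_univ, Fintype.card_fin, nsmul_eq_mul]
    rw [mul_div_cancel₀ _ hTpos.ne']
  · rw [Finset.sum_const]
    simp [Finset.card_univ, nsmul_eq_mul]
  · intro Q hQ hfeas
    rw [Finset.sum_const]
    simp only [Finset.card_univ, Fintype.card_fin, nsmul_eq_mul]
    -- AM-GM argument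
    set z : Fin T → ℝ := fun t => 1 + Q t with hz
    have hz1 : ∀ t, (1 : ℝ) ≤ z t := fun t => by have := hQ t; simp [hz]; linarith
    have hzpos : ∀ t, (0 : ℝ) < z t := fun t => lt_of_lt_of_le one_pos (hz1 t)
    have hlogprod : D ≤ Real.logb 2 (∏ t, z t) := by
      rw [Real.logb_prod _ _ (fun t _ => (hzpos t).ne')]
      exact hfeas
    have hprod1 : (2 : ℝ) ^ D ≤ ∏ t, z t := by
      have hP : (0 : ℝ) < ∏ t, z t := Finset.prod_pos fun t _ => hzpos t
      calc (2 : ℝ) ^ D ≤ (2 : ℝ) ^ Real.logb 2 (∏ t, z t) :=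
            Real.rpow_le_rpow_left_iff (by norm_num) |>.mpr hlogprod
        _ = ∏ t, z t := Real.rpow_logb (by norm_num) (by norm_num) hP
    have hgm : (2 : ℝ) ^ (D / (T : ℝ)) ≤ ∏ t, (z t) ^ ((T : ℝ)⁻¹) := by
      have := Real.rpow_le_rpow (by positivity) hprod1 (inv_nonneg.mpr hTpos.le)
      rwa [← Real.rpow_mul (by norm_num : (0:ℝ) ≤ 2), ← div_eq_mul_inv,
        ← Real.finset_prod_rpow _ _ (fun t _ => (hzpos t).le)] at this
    have ham : ∏ t, (z t) ^ ((T : ℝ)⁻¹) ≤ ∑ t, (T : ℝ)⁻¹ * z t := by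
      apply Real.geom_mean_le_arith_mean_weighted
      · exact fun t _ => inv_nonneg.mpr hTpos.le
      · rw [Finset.sum_const]
        simp [Finset.card_univ, nsmul_eq_mul, mul_inv_cancel₀ hTpos.ne']
      · exact fun t _ => (hzpos t).le
    have hsum : ∑ t, (T : ℝ)⁻¹ * z t = 1 + (T : ℝ)⁻¹ * ∑ t, Q t := by
      rw [← Finset.mul_sum]
      simp only [hz, Finset.sum_add_distrib, Finset.sum_const, Finset.card_univ,
        Fintype.card_fin, nsmul_eq_mul, mul_one]
      rw [mul_add, inv_mul_cancel₀ hTpos.ne']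
    have key : (2 : ℝ) ^ (D / (T : ℝ)) ≤ 1 + (T : ℝ)⁻¹ * ∑ t, Q t := by
      calc (2 : ℝ) ^ (D / (T : ℝ)) ≤ ∏ t, (z t) ^ ((T : ℝ)⁻¹) := hgm
        _ ≤ ∑ t, (T : ℝ)⁻¹ * z t := ham
        _ = 1 + (T : ℝ)⁻¹ * ∑ t, Q t := hsum
    have := mul_le_mul_of_nonneg_left key hTpos.le
    rw [mul_add, mul_one, ← mul_assoc, mul_inv_cancel₀ hTpos.ne', one_mul] at this
    linarith
end

section
/- In the single-user AWGN energy minimization problem over T time blocks, any feasible power allocation achieving the minimum total energy must be the equal-power allocation: if P : Fin T → ℝ satisfies P t ≥ 0 for all t, D ≤ ∑_t log₂(1 + P t), and ∑_t P t = T·(2^{D/T} − 1), then P t = 2^{D/T} − 1 for every t. -/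
/-!
The energy constraint fixes the arithmetic mean of the numbers `1 + P t` at `2 ^ (D / T)`, while
feasibility says that their geometric mean is at least `2 ^ (D / T)`. So AM-GM, i.e. Jensen's
inequality for the strictly concave `log`, holds with equality, and its equality case forces all
`1 + P t` to equal their mean.
-/

open Finset Real

section Jensen

variable {𝕜 E β ι : Type*} [Field 𝕜] [LinearOrder 𝕜] [IsStrictOrderedRing 𝕜] [AddCommGroup E]
  [AddCommGroup β] [PartialOrder β] [IsOrderedAddMonoid β] [Module 𝕜 E] [Module 𝕜 β]
  [IsStrictOrderedModule 𝕜 β] [Fintype ι] {s : Set E} {f : E → β} {p : ι → E}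

theorem StrictConcaveOn.eq_average_of_map_average_le (hf : StrictConcaveOn 𝕜 s f)
    (hp : ∀ i, p i ∈ s)
    (h : f (∑ i, (Fintype.card ι : 𝕜)⁻¹ • p i) ≤ ∑ i, (Fintype.card ι : 𝕜)⁻¹ • f (p i))
    (i : ι) : p i = ∑ j, (Fintype.card ι : 𝕜)⁻¹ • p j := by
  have hcard : (0 : 𝕜) < Fintype.card ι := Nat.cast_pos.2 (Fintype.card_pos_iff.2 ⟨i⟩)
  have hw : ∑ _j : ι, (Fintype.card ι : 𝕜)⁻¹ = 1 := by
    rw [sum_const, card_univ, nsmul_eq_mul, mul_inv_cancel₀ hcard.ne']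
  have hw₀ : ∀ j ∈ (univ : Finset ι), 0 < (Fintype.card ι : 𝕜)⁻¹ := fun _ _ ↦ inv_pos.2 hcard
  have hmem : ∀ j ∈ (univ : Finset ι), p j ∈ s := fun j _ ↦ hp j
  have heq := le_antisymm h (hf.concaveOn.le_map_sum (fun j hj ↦ (hw₀ j hj).le) hw hmem)
  exact (hf.map_sum_eq_iff hw₀ hw hmem).1 heq i (mem_univ i)

end Jensen

theorem awgn_optimal_allocation_unique_general (T : ℕ) (D : ℝ)
    (P : Fin T → ℝ) (hP : ∀ t, 0 ≤ P t)
    (hfeas : D ≤ ∑ t, Real.logb 2 (1 + P t))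
    (hsum : ∑ t, P t = (T : ℝ) * ((2 : ℝ) ^ (D / (T : ℝ)) - 1)) :
    ∀ t, P t = (2 : ℝ) ^ (D / (T : ℝ)) - 1 := by
  intro t
  have hT : (0 : ℝ) < T := Nat.cast_pos.2 t.pos
  have hmean : ∑ s, (T : ℝ)⁻¹ • (1 + P s) = 2 ^ (D / T) := by
    rw [← smul_sum, sum_add_distrib, hsum, sum_const, card_univ, Fintype.card_fin, smul_eq_mul]
    field_simp
    ring
  have hlog : D * log 2 ≤ ∑ s, log (1 + P s) := by
    simpa only [logb, ← sum_div, le_div_iff₀ (log_pos one_lt_two)] using hfeas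
  have hjensen : log (∑ s, (T : ℝ)⁻¹ • (1 + P s)) ≤ ∑ s, (T : ℝ)⁻¹ • log (1 + P s) := by
    rw [hmean, log_rpow two_pos, ← smul_sum, smul_eq_mul, div_eq_inv_mul, mul_assoc]
    gcongr
  have hpos : ∀ s, 1 + P s ∈ Set.Ioi (0 : ℝ) := fun s ↦ by
    simp only [Set.mem_Ioi]
    linarith [hP s]
  have hequal := strictConcaveOn_log_Ioi.eq_average_of_map_average_le hpos
    (by simpa only [Fintype.card_fin] using hjensen) t
  simp only [Fintype.card_fin, hmean] at hequal
  linarith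

/-- Uniqueness of the optimal allocation: any feasible power allocation attaining the
minimum total energy `T * (2^(D/T) - 1)` must be the equal-power allocation. -/
theorem awgn_optimal_allocation_unique (T : ℕ) (hT : 0 < T) (D : ℝ) (hD : 0 ≤ D)
    (P : Fin T → ℝ) (hP : ∀ t, 0 ≤ P t)
    (hfeas : D ≤ ∑ t, Real.logb 2 (1 + P t))
    (hsum : ∑ t, P t = (T : ℝ) * ((2 : ℝ) ^ (D / (T : ℝ)) - 1)) :
    ∀ t, P t = (2 : ℝ) ^ (D / (T : ℝ)) - 1 :=
  awgn_optimal_allocation_unique_general T D P hP hfeas hsum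
end
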